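/- Let k ≥ 5 and suppose k + 2 ≤ n ≤ (3k−1)/2. Then (k+1)(n−k) + 2 ≤ C(k,0) + C(k,1) + C(k,2), and consequently g(n,k) ≥ k−2. -/

import Mathlib

open scoped Classical

noncomputable section

/-- Boolean functions in `n` variables. -/
abbrev BF (n : ℕ) := (Fin n → ZMod 2) → ZMod 2

/-- `A` is a `k`-dimensional flat (coset of a `k`-dimensional linear subspace) of `𝔽₂ⁿ`. -/
def IsFlat {n : ℕ} (A : Set (Fin n → ZMod 2)) (k : ℕ) : Prop :=
  ∃ (W : Submodule (ZMod 2) (Fin n → ZMod 2)) (v : Fin n → ZMod 2),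
    Module.finrank (ZMod 2) W = k ∧ A = (fun w => v + w) '' (W : Set (Fin n → ZMod 2))

/-- The sum (parity) of `f` over a subset of `𝔽₂ⁿ`. -/
def flatSum {n : ℕ} (f : BF n) (A : Set (Fin n → ZMod 2)) : ZMod 2 :=
  ∑ x ∈ A.toFinite.toFinset, f x

/-- The restriction of `f` to `A` has algebraic degree at most `d`:
by the standard parity criterion, this holds iff the sum of `f` over every
`(d+1)`-dimensional flat contained in `A` vanishes. -/
def DegLE {n : ℕ} (f : BF n) (A : Set (Fin n → ZMod 2)) (d : ℕ) : Prop :=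
  ∀ B : Set (Fin n → ZMod 2), IsFlat B (d + 1) → B ⊆ A → flatSum f B = 0

/-- The algebraic degree of the restriction of `f` to `A`. -/
def degOn {n : ℕ} (f : BF n) (A : Set (Fin n → ZMod 2)) : ℕ :=
  sInf {d | DegLE f A d}

/-- `α(f, k)`: the minimal algebraic degree of `f` restricted to a `k`-dimensional flat. -/
def alphaDeg {n : ℕ} (f : BF n) (k : ℕ) : ℕ :=
  sInf {d | ∃ A, IsFlat A k ∧ degOn f A = d}

/-- `g(n, k) = max_f α(f, k)`. -/
def gdeg (n k : ℕ) : ℕ :=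
  sSup {m | ∃ f : BF n, alphaDeg f k = m}

/-- The nonlinearity of the restriction of `f` to `A`: the minimal Hamming distance,
on `A`, from `f` to an affine function. -/
def nlOn {n : ℕ} (f : BF n) (A : Set (Fin n → ZMod 2)) : ℕ :=
  sInf {m | ∃ (a : Fin n → ZMod 2) (c : ZMod 2),
    m = (A.toFinite.toFinset.filter (fun x => f x ≠ (∑ i, a i * x i) + c)).card}

/-! For a `k`-flat `A`, the `(k - c)`-subflats of `A` carry at least `∑_{i ≤ c} C(k, i)` linearly
independent parity functionals `f ↦ ∑_{x ∈ B} f x`: inside `A ≅ 𝔽₂ᵏ` take, for each `s` with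
`|s| ≤ c`, the flat on which the coordinates of a `c`-set `t ⊇ s` agree with the indicator of `s`;
its incidences with the indicator points are triangular with respect to `|s|`. Hence a uniformly
random `f` vanishes on all `(d + 1)`-subflats of a fixed `k`-flat with probability at most
`2 ^ (-∑_{i < k - d} C(k, i))`, while there are fewer than `2 ^ ((k + 1)(n - k) + 2)` flats of
dimension `k` (via `∏_{j ≥ 1} (1 - 2⁻ʲ) > 1/4`). A union bound gives an `f` whose restriction to
every `k`-flat has degree above `d`. With `d = k - 3` the numerical condition is the first claim. -/

open Function Module

theorem LinearMap.natCard_ker_mul_natCard_of_surjective {K V W : Type*} [Ring K] [AddCommGroup V]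
    [Module K V] [AddCommGroup W] [Module K W] (Ψ : V →ₗ[K] W) (hΨ : Surjective Ψ) :
    Nat.card (LinearMap.ker Ψ) * Nat.card W = Nat.card V := by
  rw [Submodule.card_eq_card_quotient_mul_card (LinearMap.ker Ψ),
    Nat.card_congr (Ψ.quotKerEquivOfSurjective hΨ).toEquiv]

theorem exists_forall_ne_zero_of_card_lt {K V W ι : Type*} [Ring K] [AddCommGroup V]
    [Module K V] [AddCommGroup W] [Module K W] [Fintype ι] [Finite V] [Finite W]
    (Ψ : ι → V →ₗ[K] W) (hΨ : ∀ i, Surjective (Ψ i)) (h : Fintype.card ι < Nat.card W) :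
    ∃ v, ∀ i, Ψ i v ≠ 0 := by
  by_contra! hcover
  have hunion : (Set.univ : Set V) ⊆ ⋃ i, (LinearMap.ker (Ψ i) : Set V) := fun v _ => by
    simpa using hcover v
  have hcard : Nat.card V * Nat.card W ≤ Fintype.card ι * Nat.card V := calc
    Nat.card V * Nat.card W ≤ (∑ i, (LinearMap.ker (Ψ i) : Set V).ncard) * Nat.card W := by
      gcongr
      rw [← Set.ncard_univ]
      exact (Set.ncard_le_ncard hunion).trans (Set.ncard_iUnion_le_of_fintype _)
    _ = Fintype.card ι * Nat.card V := by
      simp_rw [Finset.sum_mul, ← Nat.card_coe_set_eq, SetLike.coe_sort_coe,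
        LinearMap.natCard_ker_mul_natCard_of_surjective _ (hΨ _), Finset.sum_const,
        Finset.card_univ, smul_eq_mul]
  have : 0 < Nat.card V := Nat.card_pos
  nlinarith

theorem LinearMap.surjective_of_triangular {K V ι : Type*} [Field K] [AddCommGroup V]
    [Module K V] [Fintype ι] [DecidableEq ι] (Ψ : V →ₗ[K] ι → K) (δ : ι → V) (r : ι → ℕ)
    (hdiag : ∀ i, Ψ (δ i) i ≠ 0) (hlower : ∀ i j, Ψ (δ j) i ≠ 0 → i ≠ j → r i < r j) :
    Surjective Ψ := by
  have hsingle : ∀ j, Pi.single j 1 ∈ LinearMap.range Ψ := by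
    intro j
    induction hj : r j using Nat.strong_induction_on generalizing j with
    | _ N ih =>
    have hexpand : Ψ (δ j) = Ψ (δ j) j • Pi.single j 1 +
        ∑ i ∈ Finset.univ.erase j, Ψ (δ j) i • Pi.single i 1 := by
      rw [Finset.add_sum_erase _ (fun i => Ψ (δ j) i • Pi.single i (1 : K)) (Finset.mem_univ j)]
      simp_rw [← Pi.single_smul', smul_eq_mul, mul_one]
      exact (Finset.univ_sum_single _).symm
    have hlow : ∑ i ∈ Finset.univ.erase j, Ψ (δ j) i • Pi.single i 1 ∈ LinearMap.range Ψ := by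
      refine Submodule.sum_mem _ fun i hi => ?_
      by_cases h0 : Ψ (δ j) i = 0
      · simp [h0]
      · exact Submodule.smul_mem _ _ (ih _ (hj ▸ hlower i j h0 (Finset.ne_of_mem_erase hi)) i rfl)
    have hdiag_mem : Ψ (δ j) j • Pi.single j (1 : K) ∈ LinearMap.range Ψ := by
      rw [eq_sub_of_add_eq hexpand.symm]
      exact Submodule.sub_mem _ (LinearMap.mem_range_self _ _) hlow
    simpa [smul_smul, hdiag j] using Submodule.smul_mem _ (Ψ (δ j) j)⁻¹ hdiag_mem
  rw [← LinearMap.range_eq_top, eq_top_iff, ← (Pi.basisFun K ι).span_eq, Submodule.span_le]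
  rintro _ ⟨i, rfl⟩
  simpa using hsingle i

theorem natCard_finrank_eq_mul_prod_le {K V : Type*} [Field K] [Fintype K] [AddCommGroup V]
    [Module K V] [Finite V] (k : ℕ) :
    Nat.card {W : Submodule K V // finrank K W = k} *
      ∏ i : Fin k, (Fintype.card K ^ k - Fintype.card K ^ (i : ℕ)) ≤ Nat.card V ^ k := by
  have : Fintype {W : Submodule K V // finrank K W = k} := Fintype.ofFinite _
  let bases :=
    Σ W : {W : Submodule K V // finrank K W = k}, {s : Fin k → W.1 // LinearIndependent K s}
  have hcard : Nat.card bases = Nat.card {W : Submodule K V // finrank K W = k} *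
      ∏ i : Fin k, (Fintype.card K ^ k - Fintype.card K ^ (i : ℕ)) := by
    rw [Nat.card_sigma, Nat.card_eq_fintype_card, ← smul_eq_mul, ← Finset.card_univ,
      ← Finset.sum_const]
    refine Finset.sum_congr rfl fun W _ => ?_
    rw [card_linearIndependent W.2.ge, W.2]
  have hinj : Injective fun b : bases => fun i => (b.2.1 i : V) := by
    rintro ⟨⟨W, hW⟩, s, hs⟩ ⟨⟨W', hW'⟩, s', hs'⟩ h
    have hspan {U : Submodule K V} (hU : finrank K U = k) (u : Fin k → U)
        (hu : LinearIndependent K u) : Submodule.span K (Set.range fun i => (u i : V)) = U := by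
      refine Submodule.eq_of_le_of_finrank_le ?_ ?_
      · rw [Submodule.span_le]
        rintro _ ⟨i, rfl⟩
        exact (u i).2
      · rw [hU]
        exact ((finrank_span_eq_card (hu.map' U.subtype U.ker_subtype)).trans
          (Fintype.card_fin k)).ge
    obtain rfl : W = W' :=
      (hspan hW s hs).symm.trans ((congrArg _ (congrArg _ h)).trans (hspan hW' s' hs'))
    obtain rfl : s = s' := funext fun i => Subtype.ext (congrFun h i)
    rfl
  calc _ = Nat.card bases := hcard.symm
    _ ≤ Nat.card (Fin k → V) := Nat.card_le_card_of_injective _ hinj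
    _ = Nat.card V ^ k := by rw [Nat.card_fun, Nat.card_fin]

theorem prod_range_two_pow_sub_succ (k : ℕ) :
    ∏ i ∈ Finset.range (k + 1), (2 ^ (k + 1) - 2 ^ i) =
      2 ^ k * (2 ^ (k + 1) - 1) * ∏ i ∈ Finset.range k, (2 ^ k - 2 ^ i) := by
  rw [Finset.prod_range_succ', pow_zero]
  have h2 i (hi : i ∈ Finset.range k) : 2 ^ (k + 1) - 2 ^ (i + 1) = 2 * (2 ^ k - 2 ^ i) := by
    have : 2 ^ i ≤ 2 ^ k := Nat.pow_le_pow_right two_pos (Finset.mem_range.mp hi).le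
    rw [pow_succ, pow_succ]
    omega
  rw [Finset.prod_congr rfl h2, Finset.prod_mul_distrib, Finset.prod_const, Finset.card_range]
  ring

-- That is, `∏_{j ≤ k} (1 - 2⁻ʲ) ≥ 1/4 + 2^(-k-1)`; the extra term is what lets the induction close.
theorem two_pow_add_two_mul_le_prod {k : ℕ} (hk : 1 ≤ k) :
    (2 ^ k + 2) * 2 ^ (k * k) ≤ 2 ^ (k + 2) * ∏ i ∈ Finset.range k, (2 ^ k - 2 ^ i) := by
  induction k, hk using Nat.le_induction with
  | base => simp
  | succ k hk ih =>
    rw [prod_range_two_pow_sub_succ]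
    generalize ∏ i ∈ Finset.range k, (2 ^ k - 2 ^ i) = P at ih ⊢
    have hx : 2 ≤ 2 ^ k := Nat.le_self_pow (by omega) 2
    have key : (2 ^ (k + 1) + 2) * 2 ^ k ≤ (2 ^ (k + 1) - 1) * (2 ^ k + 2) := by
      rw [pow_succ]
      generalize 2 ^ k = x at hx ⊢
      obtain ⟨y, rfl⟩ : ∃ y, x = y + 2 := ⟨x - 2, by omega⟩
      rw [show (y + 2) * 2 - 1 = 2 * y + 3 by omega]
      nlinarith
    calc (2 ^ (k + 1) + 2) * 2 ^ ((k + 1) * (k + 1))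
        = ((2 ^ (k + 1) + 2) * 2 ^ k) * 2 ^ (k + 1) * 2 ^ (k * k) := by ring
      _ ≤ ((2 ^ (k + 1) - 1) * (2 ^ k + 2)) * 2 ^ (k + 1) * 2 ^ (k * k) := by gcongr
      _ = 2 ^ (k + 1) * (2 ^ (k + 1) - 1) * ((2 ^ k + 2) * 2 ^ (k * k)) := by ring
      _ ≤ 2 ^ (k + 1) * (2 ^ (k + 1) - 1) * (2 ^ (k + 2) * P) := by gcongr
      _ = 2 ^ (k + 1 + 2) * (2 ^ k * (2 ^ (k + 1) - 1) * P) := by ring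

theorem two_pow_mul_self_lt_four_mul_prod (k : ℕ) :
    2 ^ (k * k) < 4 * ∏ i : Fin k, (2 ^ k - 2 ^ (i : ℕ)) := by
  rw [Fin.prod_univ_eq_prod_range (fun i => 2 ^ k - 2 ^ i)]
  rcases Nat.eq_zero_or_pos k with rfl | hk
  · simp
  refine Nat.lt_of_mul_lt_mul_left (a := 2 ^ k) ?_
  calc 2 ^ k * 2 ^ (k * k) < (2 ^ k + 2) * 2 ^ (k * k) := by gcongr; omega
    _ ≤ 2 ^ (k + 2) * ∏ i ∈ Finset.range k, (2 ^ k - 2 ^ i) := two_pow_add_two_mul_le_prod hk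
    _ = 2 ^ k * (4 * ∏ i ∈ Finset.range k, (2 ^ k - 2 ^ i)) := by ring

section Flats

variable {n : ℕ}

theorem IsFlat.exists_affine_param {A : Set (Fin n → ZMod 2)} {k : ℕ} (hA : IsFlat A k) :
    ∃ (v : Fin n → ZMod 2) (l : (Fin k → ZMod 2) →ₗ[ZMod 2] (Fin n → ZMod 2)),
      Injective l ∧ A = Set.range fun y => v + l y := by
  obtain ⟨W, v, hW, rfl⟩ := hA
  let e := LinearEquiv.ofFinrankEq (Fin k → ZMod 2) W (by rw [Module.finrank_fin_fun, hW])
  refine ⟨v, W.subtype ∘ₗ e.toLinearMap, W.injective_subtype.comp e.injective, ?_⟩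
  ext x
  simp only [Set.mem_image, SetLike.mem_coe, Set.mem_range, LinearMap.coe_comp,
    LinearEquiv.coe_coe, comp_apply, Submodule.subtype_apply]
  constructor
  · rintro ⟨w, hw, rfl⟩
    exact ⟨e.symm ⟨w, hw⟩, by simp⟩
  · rintro ⟨y, rfl⟩
    exact ⟨e y, (e y).2, rfl⟩

theorem IsFlat.image_affine {m : ℕ} {A : Set (Fin m → ZMod 2)} {d : ℕ} (hA : IsFlat A d)
    (v : Fin n → ZMod 2) (l : (Fin m → ZMod 2) →ₗ[ZMod 2] (Fin n → ZMod 2)) (hl : Injective l) :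
    IsFlat ((fun x => v + l x) '' A) d := by
  obtain ⟨W, u, hW, rfl⟩ := hA
  refine ⟨W.map l, v + l u, (Submodule.equivMapOfInjective l hl W).finrank_eq.symm.trans hW, ?_⟩
  rw [Set.image_image, Submodule.map_coe, Set.image_image]
  simp only [map_add, add_assoc]

theorem isFlat_coordinate {k : ℕ} (s : Finset (Fin k)) (α : Fin k → ZMod 2) :
    IsFlat {y : Fin k → ZMod 2 | ∀ i ∈ s, y i = α i} (k - s.card) := by
  let restrict := LinearMap.funLeft (ZMod 2) (ZMod 2) (Subtype.val : s → Fin k)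
  have hsurj : Surjective restrict :=
    LinearMap.funLeft_surjective_of_injective _ _ _ Subtype.val_injective
  refine ⟨LinearMap.ker restrict, α, ?_, ?_⟩
  · have := LinearMap.finrank_range_add_finrank_ker restrict
    rw [LinearMap.range_eq_top.mpr hsurj, finrank_top] at this
    simp only [Module.finrank_fintype_fun_eq_card, Fintype.card_coe, Fintype.card_fin] at this
    omega
  · ext y
    simp only [Set.mem_ofPred_eq, Set.mem_image, SetLike.mem_coe, LinearMap.mem_ker]
    constructor
    · intro hy
      refine ⟨y - α, funext fun i => ?_, by abel⟩
      simp [restrict, LinearMap.funLeft, hy i i.2]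
    · rintro ⟨w, hw, rfl⟩ i hi
      simpa [restrict, LinearMap.funLeft] using congrFun hw ⟨i, hi⟩

theorem isFlat_univ (k : ℕ) : IsFlat (Set.univ : Set (Fin k → ZMod 2)) k := by
  simpa using isFlat_coordinate (∅ : Finset (Fin k)) 0

theorem IsFlat.ncard {A : Set (Fin n → ZMod 2)} {k : ℕ} (hA : IsFlat A k) : A.ncard = 2 ^ k := by
  obtain ⟨W, v, rfl, rfl⟩ := hA
  rw [Set.ncard_image_of_injective _ (add_right_injective v), ← Nat.card_coe_set_eq,
    SetLike.coe_sort_coe, Module.natCard_eq_pow_finrank (K := ZMod 2), Nat.card_zmod]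

theorem IsFlat.le_of_subset {A B : Set (Fin n → ZMod 2)} {d e : ℕ} (hA : IsFlat A d)
    (hB : IsFlat B e) (hBA : B ⊆ A) : e ≤ d := by
  have := Set.ncard_le_ncard hBA
  rwa [hA.ncard, hB.ncard, Nat.pow_le_pow_iff_right (by norm_num)] at this

theorem exists_isFlat {k : ℕ} (hkn : k ≤ n) : ∃ A : Set (Fin n → ZMod 2), IsFlat A k :=
  ⟨_, (isFlat_univ k).image_affine 0
    (Function.ExtendByZero.linearMap (ZMod 2) (Fin.castLE hkn))
    (Function.extend_injective (Fin.castLE_injective hkn) 0)⟩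

theorem IsFlat.exists_disjoint_union {B : Set (Fin n → ZMod 2)} {m : ℕ} (hB : IsFlat B (m + 1)) :
    ∃ B₁ B₂ : Set (Fin n → ZMod 2), IsFlat B₁ m ∧ IsFlat B₂ m ∧ Disjoint B₁ B₂ ∧ B₁ ∪ B₂ = B := by
  obtain ⟨v, l, hl, rfl⟩ := hB.exists_affine_param
  have hH (c : ZMod 2) : IsFlat ((fun y => v + l y) '' {y | y 0 = c}) m := by
    simpa using (isFlat_coordinate {0} fun _ => c).image_affine v l hl
  have hinj : Injective fun y => v + l y := fun y z h => hl (add_left_cancel h)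
  refine ⟨_, _, hH 0, hH 1, ?_, ?_⟩
  · rw [Set.disjoint_image_iff hinj, Set.disjoint_left]
    intro y h0 h1
    exact zero_ne_one (h0.symm.trans h1)
  · rw [← Set.image_union, ← Set.image_univ]
    congr 1
    ext y
    simp only [Set.mem_union, Set.mem_ofPred_eq, Set.mem_univ, iff_true]
    generalize y 0 = c
    revert c
    decide

end Flats

theorem image_add_submodule_eq {n : ℕ} {W : Submodule (ZMod 2) (Fin n → ZMod 2)}
    {u v : Fin n → ZMod 2} (h : -u + v ∈ W) :
    (fun w => u + w) '' (W : Set (Fin n → ZMod 2)) = (fun w => v + w) '' W := by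
  have := (leftAddCoset_eq_iff (s := W.toAddSubgroup) (x := u) (y := v)).mpr h
  simpa [← Set.image_vadd] using this

theorem natCard_isFlat_le {n k : ℕ} (hkn : k ≤ n) :
    Nat.card {A : Set (Fin n → ZMod 2) // IsFlat A k} ≤
      Nat.card {W : Submodule (ZMod 2) (Fin n → ZMod 2) // finrank (ZMod 2) W = k} *
        2 ^ (n - k) := by
  have : Fintype {W : Submodule (ZMod 2) (Fin n → ZMod 2) // finrank (ZMod 2) W = k} :=
    Fintype.ofFinite _
  let coset : (Σ W : {W : Submodule (ZMod 2) (Fin n → ZMod 2) // finrank (ZMod 2) W = k},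
      (Fin n → ZMod 2) ⧸ W.1) → {A : Set (Fin n → ZMod 2) // IsFlat A k} :=
    fun q => ⟨_, q.1, q.2.out, q.1.2, rfl⟩
  have hcoset : Surjective coset := by
    rintro ⟨_, W, v, hW, rfl⟩
    refine ⟨⟨⟨W, hW⟩, Submodule.Quotient.mk v⟩, Subtype.ext (image_add_submodule_eq ?_)⟩
    exact (Submodule.Quotient.eq' W).mp (Quotient.out_eq _)
  refine (Nat.card_le_card_of_surjective _ hcoset).trans_eq ?_
  rw [Nat.card_sigma, Nat.card_eq_fintype_card, ← smul_eq_mul, ← Finset.card_univ,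
    ← Finset.sum_const]
  refine Finset.sum_congr rfl fun W _ => ?_
  have := W.1.finrank_quotient_add_finrank
  rw [W.2, Module.finrank_fin_fun] at this
  rw [Module.natCard_eq_pow_finrank (K := ZMod 2), Nat.card_zmod]
  congr 1
  omega

theorem natCard_isFlat_lt {n k : ℕ} (hkn : k ≤ n) :
    Nat.card {A : Set (Fin n → ZMod 2) // IsFlat A k} < 2 ^ ((k + 1) * (n - k) + 2) := by
  have hflats := natCard_isFlat_le hkn
  have hbases := natCard_finrank_eq_mul_prod_le (K := ZMod 2) (V := Fin n → ZMod 2) k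
  have hP := two_pow_mul_self_lt_four_mul_prod k
  rw [Nat.card_fun, Nat.card_zmod, Nat.card_fin, ZMod.card, ← pow_mul] at hbases
  generalize Nat.card {W : Submodule (ZMod 2) (Fin n → ZMod 2) // finrank (ZMod 2) W = k} = S
    at hflats hbases
  generalize ∏ i : Fin k, (2 ^ k - 2 ^ (i : ℕ)) = P at hbases hP
  rcases Nat.eq_zero_or_pos S with rfl | hS
  · rw [zero_mul] at hflats
    exact hflats.trans_lt (by positivity)
  obtain ⟨d, rfl⟩ : ∃ d, n = k + d := ⟨n - k, by omega⟩
  rw [Nat.add_sub_cancel_left] at hflats ⊢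
  refine Nat.lt_of_mul_lt_mul_right (a := 2 ^ (k * k)) ?_
  calc Nat.card {A : Set (Fin (k + d) → ZMod 2) // IsFlat A k} * 2 ^ (k * k)
      ≤ S * 2 ^ d * 2 ^ (k * k) := by gcongr
    _ < S * 2 ^ d * (4 * P) := Nat.mul_lt_mul_of_pos_left hP (by positivity)
    _ = 2 ^ d * 4 * (S * P) := by ring
    _ ≤ 2 ^ d * 4 * 2 ^ ((k + d) * k) := by gcongr
    _ = 2 ^ ((k + 1) * d + 2) * 2 ^ (k * k) := by
        rw [show 4 = 2 ^ 2 by norm_num, ← pow_add, ← pow_add, ← pow_add]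
        ring_nf

section Degree

variable {n : ℕ}

theorem flatSum_union (f : BF n) {B₁ B₂ : Set (Fin n → ZMod 2)} (h : Disjoint B₁ B₂) :
    flatSum f (B₁ ∪ B₂) = flatSum f B₁ + flatSum f B₂ := by
  unfold flatSum
  rw [← Finset.sum_union (by simpa using h)]
  congr 1
  ext
  simp

theorem DegLE.succ {f : BF n} {A : Set (Fin n → ZMod 2)} {d : ℕ} (h : DegLE f A d) :
    DegLE f A (d + 1) := by
  intro B hB hBA
  obtain ⟨B₁, B₂, hB₁, hB₂, hdisj, rfl⟩ := hB.exists_disjoint_union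
  rw [flatSum_union f hdisj, h B₁ hB₁ (Set.subset_union_left.trans hBA),
    h B₂ hB₂ (Set.subset_union_right.trans hBA), add_zero]

theorem DegLE.mono {f : BF n} {A : Set (Fin n → ZMod 2)} {d e : ℕ} (h : DegLE f A d)
    (hde : d ≤ e) : DegLE f A e := by
  induction e, hde using Nat.le_induction with
  | base => exact h
  | succ e _ ih => exact ih.succ

theorem IsFlat.degLE {A : Set (Fin n → ZMod 2)} {k : ℕ} (hA : IsFlat A k) (f : BF n) :
    DegLE f A k := fun B hB hBA => absurd (hA.le_of_subset hB hBA) (by omega)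

theorem IsFlat.lt_degOn {A : Set (Fin n → ZMod 2)} {k d : ℕ} (hA : IsFlat A k) {f : BF n}
    (h : ¬DegLE f A d) : d < degOn f A := by
  by_contra! hle
  have hdeg : DegLE f A (degOn f A) := Nat.sInf_mem (s := {d | DegLE f A d}) ⟨k, hA.degLE f⟩
  exact h (hdeg.mono hle)

theorem lt_alphaDeg {k d : ℕ} (hkn : k ≤ n) {f : BF n}
    (h : ∀ A, IsFlat A k → ¬DegLE f A d) : d < alphaDeg f k := by
  obtain ⟨A₀, hA₀⟩ := exists_isFlat hkn
  obtain ⟨A, hA, hAeq⟩ : alphaDeg f k ∈ {d | ∃ A, IsFlat A k ∧ degOn f A = d} :=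
    Nat.sInf_mem ⟨_, A₀, hA₀, rfl⟩
  exact hAeq ▸ hA.lt_degOn (h A hA)

theorem alphaDeg_le {k : ℕ} (hkn : k ≤ n) (f : BF n) : alphaDeg f k ≤ k := by
  obtain ⟨A, hA⟩ := exists_isFlat hkn
  exact (Nat.sInf_le (s := {d | ∃ A, IsFlat A k ∧ degOn f A = d}) ⟨A, hA, rfl⟩).trans
    (Nat.sInf_le (s := {d | DegLE f A d}) (hA.degLE f))

theorem alphaDeg_le_gdeg {k : ℕ} (hkn : k ≤ n) (f : BF n) : alphaDeg f k ≤ gdeg n k :=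
  le_csSup ⟨k, by rintro _ ⟨g, rfl⟩; exact alphaDeg_le hkn g⟩ ⟨f, rfl⟩

end Degree

section Spanning

variable {n : ℕ}

def flatSums {ι : Type*} (B : ι → Set (Fin n → ZMod 2)) : BF n →ₗ[ZMod 2] ι → ZMod 2 where
  toFun f i := flatSum f (B i)
  map_add' f g := by ext i; simp [flatSum, Finset.sum_add_distrib]
  map_smul' c f := by ext i; simp [flatSum, Finset.mul_sum]

theorem flatSum_single (x : Fin n → ZMod 2) (B : Set (Fin n → ZMod 2)) :
    flatSum (Pi.single x 1) B = if x ∈ B then 1 else 0 := by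
  simp [flatSum, Finset.sum_pi_single']

theorem IsFlat.exists_flatSums_surjective {A : Set (Fin n → ZMod 2)} {k c : ℕ} (hA : IsFlat A k)
    (hck : c ≤ k) :
    ∃ B : {s : Finset (Fin k) // s.card ≤ c} → Set (Fin n → ZMod 2),
      (∀ s, IsFlat (B s) (k - c) ∧ B s ⊆ A) ∧ Surjective (flatSums B) := by
  obtain ⟨v, l, hl, rfl⟩ := hA.exists_affine_param
  set φ : (Fin k → ZMod 2) → Fin n → ZMod 2 := fun y => v + l y
  have hφ : Injective φ := fun y z h => hl (add_left_cancel h)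
  choose t hst htc using fun s : {s : Finset (Fin k) // s.card ≤ c} =>
    Finset.exists_superset_card_eq s.2 (by simpa using hck)
  let ind (s : Finset (Fin k)) : Fin k → ZMod 2 := fun i => if i ∈ s then 1 else 0
  let C (s : {s : Finset (Fin k) // s.card ≤ c}) := {y : Fin k → ZMod 2 | ∀ i ∈ t s, y i = ind s i}
  have hsub {s s'} (h : ind s' ∈ C s) : s.1 ⊆ s' := fun i hi => by
    have := h i (hst s hi)
    simp only [ind, hi, if_true] at this
    by_contra hi'
    simp [hi'] at this
  refine ⟨fun s => φ '' C s, fun s => ⟨?_, Set.image_subset_range _ _⟩, ?_⟩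
  · simpa [htc] using (isFlat_coordinate (t s) (ind s)).image_affine v l hl
  · refine LinearMap.surjective_of_triangular _ (fun s => Pi.single (φ (ind s)) 1)
      (fun s => s.1.card) (fun s => ?_) (fun s s' h hne => ?_)
    · simp [flatSums, flatSum_single, hφ.mem_set_image, C]
    · simp only [flatSums, LinearMap.coe_mk, AddHom.coe_mk, flatSum_single,
        hφ.mem_set_image, ne_eq, ite_eq_right_iff, one_ne_zero, imp_false, not_not] at h
      exact Finset.card_lt_card ((hsub h).ssubset_of_ne (Subtype.val_injective.ne hne))

end Spanning

theorem card_finset_card_le (k c : ℕ) :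
    Fintype.card {s : Finset (Fin k) // s.card ≤ c} = ∑ i ∈ Finset.range (c + 1), k.choose i := by
  rw [Fintype.card_subtype, Finset.card_eq_sum_card_fiberwise (f := Finset.card)
    (t := Finset.range (c + 1)) (fun s hs => by simpa [Nat.lt_succ_iff] using hs)]
  refine Finset.sum_congr rfl fun i hi => ?_
  have hslice := Finset.card_powersetCard i (Finset.univ : Finset (Fin k))
  rw [Finset.card_univ, Fintype.card_fin] at hslice
  rw [← hslice]
  congr 1
  ext s
  simp only [Finset.mem_filter, Finset.mem_univ, true_and, Finset.mem_powersetCard_univ,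
    and_iff_right_iff_imp]
  rintro rfl
  simpa [Nat.lt_succ_iff] using hi

theorem add_two_le_sum_range_three_choose {n k : ℕ} (hk : 1 ≤ k) (h : 2 * n ≤ 3 * k - 1) :
    (k + 1) * (n - k) + 2 ≤ ∑ i ∈ Finset.range 3, k.choose i := by
  have hchoose : k.choose 2 * 2 = k * (k - 1) := by
    rw [Nat.choose_two_right, Nat.div_mul_cancel (Nat.even_mul_pred_self k).two_dvd]
  simp only [Finset.sum_range_succ, Finset.sum_range_zero, Nat.choose_zero_right,
    Nat.choose_one_right]
  obtain ⟨e, rfl⟩ : ∃ e, k = e + 1 := ⟨k - 1, by omega⟩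
  rw [Nat.add_sub_cancel] at hchoose
  have : 2 * (n - (e + 1)) ≤ e := by omega
  nlinarith

theorem exists_forall_isFlat_not_degLE {n k d : ℕ} (hdk : d < k)
    (h : Nat.card {A : Set (Fin n → ZMod 2) // IsFlat A k} <
      2 ^ ∑ i ∈ Finset.range (k - d), k.choose i) :
    ∃ f : BF n, ∀ A, IsFlat A k → ¬DegLE f A d := by
  choose B hB hsurj using fun A : {A : Set (Fin n → ZMod 2) // IsFlat A k} =>
    A.2.exists_flatSums_surjective (c := k - (d + 1)) (by omega)
  have hcard : Fintype.card {A : Set (Fin n → ZMod 2) // IsFlat A k} <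
      Nat.card ({s : Finset (Fin k) // s.card ≤ k - (d + 1)} → ZMod 2) := by
    rwa [Nat.card_fun, Nat.card_zmod, Nat.card_eq_fintype_card (α := {s : Finset (Fin k) // _}),
      card_finset_card_le, show k - (d + 1) + 1 = k - d by omega, ← Nat.card_eq_fintype_card]
  obtain ⟨f, hf⟩ := exists_forall_ne_zero_of_card_lt _ hsurj hcard
  refine ⟨f, fun A hA hdeg => hf ⟨A, hA⟩ (funext fun s => ?_)⟩
  obtain ⟨hBflat, hBA⟩ := hB ⟨A, hA⟩ s
  exact hdeg _ (by rwa [show k - (k - (d + 1)) = d + 1 by omega] at hBflat) hBA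

theorem lt_gdeg_of_le_sum_choose {n k d : ℕ} (hdk : d < k) (hkn : k ≤ n)
    (h : (k + 1) * (n - k) + 2 ≤ ∑ i ∈ Finset.range (k - d), k.choose i) : d < gdeg n k := by
  obtain ⟨f, hf⟩ := exists_forall_isFlat_not_degLE hdk
    ((natCard_isFlat_lt hkn).trans_le (Nat.pow_le_pow_right two_pos h))
  exact (lt_alphaDeg hkn hf).trans_le (alphaDeg_le_gdeg hkn f)

/-- For `k ≥ 5` and `k + 2 ≤ n ≤ (3k-1)/2`:
`(k+1)(n-k)+2 ≤ C(k,0)+C(k,1)+C(k,2)` and `g(n,k) ≥ k-2`. -/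
theorem stmt13 {n k : ℕ} (hk : 5 ≤ k) (h1 : k + 2 ≤ n) (h2 : 2 * n ≤ 3 * k - 1) :
    (k + 1) * (n - k) + 2 ≤ ∑ i ∈ Finset.range 3, Nat.choose k i ∧
    k - 2 ≤ gdeg n k := by
  have hbound := add_two_le_sum_range_three_choose (by omega) h2
  refine ⟨hbound, ?_⟩
  have := lt_gdeg_of_le_sum_choose (n := n) (k := k) (d := k - 3) (by omega) (by omega)
    (by rwa [show k - (k - 3) = 3 by omega])
  omega
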